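/- Define Bernoulli polynomials of the second kind b_l(x) by t(1+t)^x / log(1+t) = ∑_{l≥0} b_l(x) t^l/l! in ℚ[x][[t]], and Bernoulli polynomials of order a by (t/(e^t-1))^a e^{xt} = ∑ B_n^{(a)}(x) t^n/n!. Then for every n ≥ 1, 0 ≤ l ≤ n-1, and any c, ∑_{l₁+⋯+lₙ = l} multinomial(l; l₁,…,lₙ) · b_{l₁}(c)⋯b_{lₙ}(c) = B_l^{(l-n+1)}(cn+1). -/

import Mathlib

/-
Put `E(u) = e^u - 1 = u ψ(u)`. Substituting `t = E(u)` into the generating function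
`G(t) = (1+t)^c t/log(1+t)` of the `b_l(c)` gives `e^{cu} ψ(u)`, because `(1+E)^c = e^{cu}` and
`log(1+E) = u` (both follow by comparing derivatives). The sum is `l! [t^l] G^n`, and the residue
change of variables `[t^l] F(t) = [u^l] F(E(u)) E'(u) ψ(u)^{-(l+1)}` turns it into
`l! [u^l] e^{(cn+1)u} ψ(u)^{n-1-l}`, which is `B_l^{(l-n+1)}(cn+1)`.
-/

open PowerSeries Nat

noncomputable section

/-- The exponential series `e^t ∈ ℚ[[t]]`. -/
def expS : PowerSeries ℚ := PowerSeries.exp ℚ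

/-- `log(1+t) = ∑_{k≥1} (-1)^{k+1} t^k / k`. -/
def logS : PowerSeries ℚ := PowerSeries.mk fun k => if k = 0 then 0 else (-1 : ℚ)^(k+1) / k

/-- `log(1+t)/t = ∑_{k≥0} (-1)^k t^k/(k+1)`. -/
def LtS : PowerSeries ℚ := PowerSeries.mk fun k => (-1 : ℚ)^k / (k+1)

/-- `(e^{bt} - 1)/t`. -/
def ebt (b : ℚ) : PowerSeries ℚ := PowerSeries.mk fun m => b^(m+1) / (m+1)!

/-- Falling factorial `(x)_m = x(x-1)⋯(x-m+1)`. -/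
def ff (x : ℚ) (m : ℕ) : ℚ := ∏ i ∈ Finset.range m, (x - i)

/-- `(1+t)^x = ∑_m (x)_m t^m/m!`. -/
def onePlusPow (x : ℚ) : PowerSeries ℚ := PowerSeries.mk fun m => ff x m / m !

/-- Integer powers of a power series (negative powers via `PowerSeries.inv`). -/
def zp (f : PowerSeries ℚ) : ℤ → PowerSeries ℚ
  | Int.ofNat n => f ^ n
  | Int.negSucc n => f⁻¹ ^ (n + 1)

/-- Stirling numbers of the second kind. -/
def S2 : ℕ → ℕ → ℕ
  | 0, 0 => 1
  | 0, _ + 1 => 0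
  | _ + 1, 0 => 0
  | n + 1, k + 1 => (k + 1) * S2 n (k + 1) + S2 n k

/-- Signed Stirling numbers of the first kind: `(x)_n = ∑_l S1 n l • x^l`. -/
def S1 : ℕ → ℕ → ℤ
  | 0, 0 => 1
  | 0, _ + 1 => 0
  | _ + 1, 0 => 0
  | n + 1, k + 1 => S1 n k - n * S1 n (k + 1)

/-- Bernoulli polynomial of (integer) order `a` evaluated at `x`:
`(t/(e^t-1))^a e^{xt} = ∑_m Bpol a x m • t^m/m!`. -/
def Bpol (a : ℤ) (x : ℚ) (m : ℕ) : ℚ :=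
  m ! * PowerSeries.coeff m (zp (ebt 1)⁻¹ a * PowerSeries.rescale x expS)

/-- Bernoulli numbers of order `a`. -/
def Bnum (a : ℤ) (m : ℕ) : ℚ := Bpol a 0 m

/-- Narumi numbers: `(log(1+t)/t)^n = ∑_l Nnum n l • t^l/l!`. -/
def Nnum (n l : ℕ) : ℚ := l ! * PowerSeries.coeff l (LtS ^ n)

/-- Narumi polynomials of (integer) order `a`:
`(log(1+t)/t)^a (1+t)^x = ∑_l Npol a x l • t^l/l!`. -/
def Npol (a : ℤ) (x : ℚ) (l : ℕ) : ℚ :=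
  l ! * PowerSeries.coeff l (zp LtS a * onePlusPow x)

/-- Bernoulli polynomials of the second kind:
`t(1+t)^x/log(1+t) = ∑_m b2 x m • t^m/m!`. -/
def b2 (x : ℚ) (m : ℕ) : ℚ := m ! * PowerSeries.coeff m (onePlusPow x * LtS⁻¹)

/-- Poisson–Charlier polynomial `C_n(x;a)`. -/
def PC (n : ℕ) (x a : ℚ) : ℚ :=
  ∑ k ∈ Finset.range (n + 1), (n.choose k : ℚ) * (-1)^(n - k) * (a⁻¹)^k * ff x k

/-- Generalized binomial coefficient `C(x, m) = (x)_m/m!`. -/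
def gchoose (x : ℚ) (m : ℕ) : ℚ := ff x m / m !

/-- Action of a power series `f(t) = ∑ a_k t^k/k!` on a polynomial:
`f(t) p(x) = ∑_k a_k p^{(k)}(x)/k!` (a finite sum). -/
def act (f : PowerSeries ℚ) (p : Polynomial ℚ) : Polynomial ℚ :=
  ∑ k ∈ Finset.range (p.natDegree + 1),
    PowerSeries.coeff k f • (⇑Polynomial.derivative)^[k] p

/-- `e^{xt} ∈ (ℚ[x])[[t]]`. -/
def expPoly : PowerSeries (Polynomial ℚ) :=
  PowerSeries.mk fun k => ((k ! : ℚ)⁻¹) • Polynomial.X ^ k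

/-- The Sheffer polynomial sequence attached to an invertible series `f`:
`f(t) e^{xt} = ∑_n (polyOf f n) t^n/n!`. -/
def polyOf (f : PowerSeries ℚ) (n : ℕ) : Polynomial ℚ :=
  (n ! : ℚ) • PowerSeries.coeff n (PowerSeries.map Polynomial.C f * expPoly)

/-- `((1-λ)/(e^t-λ))^α`. -/
def FEser (lam : ℚ) (α : ℕ) : PowerSeries ℚ :=
  (PowerSeries.C (1 - lam) * (expS - PowerSeries.C lam)⁻¹) ^ α

/-- Frobenius–Euler polynomials of order `α`. -/
def FE (lam : ℚ) (α n : ℕ) : Polynomial ℚ := polyOf (FEser lam α) n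

/-- `(2/(e^t+1))^α`. -/
def Eser (α : ℕ) : PowerSeries ℚ := (PowerSeries.C (2 : ℚ) * (expS + 1)⁻¹) ^ α

/-- Euler polynomials of order `α`. -/
def Epol (α n : ℕ) : Polynomial ℚ := polyOf (Eser α) n

/-- `((1-λ)/(e^{(λ-1)t}-λ))^α`. -/
def Aser (lam : ℚ) (α : ℕ) : PowerSeries ℚ :=
  (PowerSeries.C (1 - lam) *
    (PowerSeries.rescale (lam - 1) expS - PowerSeries.C lam)⁻¹) ^ α

/-- Frobenius-type Eulerian polynomials of order `α`. -/
def Apol (lam : ℚ) (α n : ℕ) : Polynomial ℚ := polyOf (Aser lam α) n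

end

section

variable {R : Type*} [CommSemiring R]

theorem coeff_X_mul_derivative (g : R⟦X⟧) (n : ℕ) :
    coeff n (X * d⁄dX R g) = n * coeff n g := by
  cases n with
  | zero => simp
  | succ m => rw [coeff_succ_X_mul, coeff_derivative, mul_comm, Nat.cast_succ]

theorem derivative_X_mul (ψ : R⟦X⟧) : d⁄dX R (X * ψ) = ψ + X * d⁄dX R ψ := by
  rw [Derivation.leibniz, derivative_X, smul_eq_mul, smul_eq_mul, mul_one, add_comm]

theorem coeff_pow_eq_sum_antidiagonalTuple (F : R⟦X⟧) (n l : ℕ) :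
    coeff l (F ^ n) = ∑ f ∈ Finset.Nat.antidiagonalTuple n l, ∏ i, coeff (f i) F := by
  rw [← Fin.prod_const, coeff_prod, ← Finset.piAntidiag_univ_fin_eq_antidiagonalTuple,
    Finset.finsuppAntidiag, Finset.sum_map]
  exact Finset.sum_attach _ (fun f : Fin n → ℕ => ∏ i, coeff (f i) F)

theorem factorial_mul_coeff_pow (F : R⟦X⟧) (n l : ℕ) :
    l ! * coeff l (F ^ n) = ∑ f ∈ Finset.Nat.antidiagonalTuple n l,
      (Nat.multinomial Finset.univ f : R) * ∏ i, ((f i)! * coeff (f i) F) := by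
  rw [coeff_pow_eq_sum_antidiagonalTuple, Finset.mul_sum]
  refine Finset.sum_congr rfl fun f hf => ?_
  rw [Finset.prod_mul_distrib, ← mul_assoc, ← Nat.cast_prod, ← Nat.cast_mul,
    mul_comm (Nat.multinomial _ _), Nat.multinomial_spec, Finset.Nat.mem_antidiagonalTuple.mp hf]

end

theorem constantCoeff_subst_of_constantCoeff_eq_zero {R : Type*} [CommRing R] {a : R⟦X⟧}
    (ha : constantCoeff a = 0) (F : R⟦X⟧) : constantCoeff (F.subst a) = constantCoeff F := by
  have h := constantCoeff_subst_eq_zero ha (F - C (constantCoeff F)) (by simp)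
  rw [subst_sub (HasSubst.of_constantCoeff_zero' ha), subst_C, map_sub, sub_eq_zero] at h
  exact h

theorem rescale_exp_pow {A : Type*} [CommRing A] [Algebra ℚ A] (a : A) (N : ℕ) :
    rescale a (exp A) ^ N = rescale (N * a) (exp A) := by
  rw [← map_pow, exp_pow_eq_rescale_exp, rescale_rescale]

section ChangeOfVariables

variable {K : Type*} [Field K] [CharZero K] {ψ : K⟦X⟧}

/-- `φ'/φ^(i+2)` is the derivative of `-φ^(-(i+1))/(i+1)`, so it has no residue. -/
theorem coeff_succ_derivative_X_mul_mul_inv_pow (hψ : constantCoeff ψ ≠ 0) (i : ℕ) :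
    coeff (i + 1) (d⁄dX K (X * ψ) * ψ⁻¹ ^ (i + 2)) = 0 := by
  have hDpow : d⁄dX K (ψ⁻¹ ^ (i + 1)) = -(C ((i : K) + 1) * (ψ⁻¹ ^ (i + 2) * d⁄dX K ψ)) := by
    rw [derivative_pow, derivative_inv', Nat.add_sub_cancel]; simp; ring
  have key : C ((i : K) + 1) * (d⁄dX K (X * ψ) * ψ⁻¹ ^ (i + 2)) =
      C ((i : K) + 1) * ψ⁻¹ ^ (i + 1) - X * d⁄dX K (ψ⁻¹ ^ (i + 1)) := by
    rw [derivative_X_mul, hDpow]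
    linear_combination (C ((i : K) + 1) * ψ⁻¹ ^ (i + 1)) * PowerSeries.mul_inv_cancel ψ hψ
  have := congrArg (coeff (i + 1)) key
  rwa [map_sub, coeff_X_mul_derivative, coeff_C_mul, coeff_C_mul, Nat.cast_succ, sub_self,
    mul_eq_zero_iff_left (Nat.cast_add_one_ne_zero i)] at this

theorem coeff_X_mul_pow_mul_derivative_X_mul_mul_inv_pow (hψ : constantCoeff ψ ≠ 0)
    {k l : ℕ} (hkl : k ≤ l) :
    coeff l ((X * ψ) ^ k * d⁄dX K (X * ψ) * ψ⁻¹ ^ (l + 1)) = if k = l then 1 else 0 := by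
  obtain ⟨j, rfl⟩ := Nat.exists_eq_add_of_le hkl
  have hψk : ψ ^ k * ψ⁻¹ ^ k = 1 := by rw [← mul_pow, PowerSeries.mul_inv_cancel ψ hψ, one_pow]
  have hsplit : (X * ψ) ^ k * d⁄dX K (X * ψ) * ψ⁻¹ ^ (k + j + 1) =
      X ^ k * (d⁄dX K (X * ψ) * ψ⁻¹ ^ (j + 1)) := by
    rw [add_assoc, pow_add, mul_pow]
    linear_combination (X ^ k * d⁄dX K (X * ψ) * ψ⁻¹ ^ (j + 1)) * hψk
  rw [hsplit, add_comm k j, coeff_X_pow_mul]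
  rcases j with _ | i
  · simp [hψ]
  · simpa using coeff_succ_derivative_X_mul_mul_inv_pow hψ i

/-- Only `trunc (l + 1) F` contributes, and on `X ^ k` the left side is `δ_{kl}` by the previous
lemma. -/
theorem coeff_subst_X_mul_mul_derivative_mul_inv_pow (hψ : constantCoeff ψ ≠ 0)
    (F : K⟦X⟧) (l : ℕ) :
    coeff l (F.subst (X * ψ) * d⁄dX K (X * ψ) * ψ⁻¹ ^ (l + 1)) = coeff l F := by
  have hφ : HasSubst (X * ψ) := HasSubst.of_constantCoeff_zero' (by simp)
  have htail (S : K⟦X⟧) : coeff l ((X * ψ) ^ (l + 1) * S) = 0 := by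
    rw [mul_pow, mul_assoc, coeff_X_pow_mul', if_neg (by omega)]
  conv_lhs => rw [eq_X_pow_mul_shift_add_trunc (l + 1) F]
  rw [subst_add hφ, subst_mul hφ, subst_pow hφ, subst_X hφ, subst_coe hφ,
    Polynomial.aeval_eq_sum_range' (natDegree_trunc_lt F l), add_mul, add_mul, map_add,
    mul_assoc, mul_assoc, htail, zero_add, Finset.sum_mul, Finset.sum_mul, map_sum]
  rw [Finset.sum_congr rfl fun i hi => by
    rw [smul_mul_assoc, smul_mul_assoc, coeff_smul,
      coeff_X_mul_pow_mul_derivative_X_mul_mul_inv_pow hψ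
        (Nat.lt_succ_iff.mp (Finset.mem_range.mp hi)),
      coeff_trunc, if_pos (Finset.mem_range.mp hi)]]
  simp

end ChangeOfVariables

theorem derivative_subst_exp_sub_one {A : Type*} [CommRing A] [Algebra ℚ A] (F : A⟦X⟧) :
    d⁄dX A (F.subst (exp A - 1)) = ((1 + X) * d⁄dX A F).subst (exp A - 1 : A⟦X⟧) := by
  have hE : HasSubst (exp A - 1 : A⟦X⟧) := HasSubst.exp_sub_one
  rw [derivative_subst hE, subst_mul hE, subst_add hE, subst_X hE, ← coe_substAlgHom hE, map_one,
    map_sub, derivative_exp, derivative_one, sub_zero, mul_comm, add_sub_cancel]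

theorem eq_rescale_exp_of_derivative_eq_smul {c : ℚ} {H : ℚ⟦X⟧} (hD : d⁄dX ℚ H = c • H)
    (h0 : constantCoeff H = 1) : H = rescale c (exp ℚ) := by
  ext n
  induction n with
  | zero => simpa using h0
  | succ n ih =>
    have := congrArg (coeff n) hD
    rw [coeff_derivative, coeff_smul, ih] at this
    simp only [coeff_rescale, coeff_exp, smul_eq_mul, Algebra.algebraMap_self, RingHom.id_apply,
      factorial_succ, Nat.cast_mul, Nat.cast_succ] at this ⊢
    have hn : (n ! : ℚ) ≠ 0 := by positivity
    field_simp at this ⊢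
    linear_combination this

theorem X_mul_ebt (b : ℚ) : X * ebt b = rescale b (exp ℚ) - 1 := by
  ext (_ | m)
  · rw [coeff_zero_X_mul, map_sub, coeff_rescale, coeff_one]; simp
  · simp [ebt, pow_succ, div_eq_mul_inv]

theorem constantCoeff_ebt (b : ℚ) : constantCoeff (ebt b) = b := by
  rw [← coeff_zero_eq_constantCoeff_apply]; simp [ebt]

theorem one_add_X_mul_derivative_onePlusPow (c : ℚ) :
    (1 + X) * d⁄dX ℚ (onePlusPow c) = c • onePlusPow c := by
  ext m
  rw [add_mul, one_mul, map_add, coeff_X_mul_derivative, coeff_derivative, coeff_smul]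
  simp only [onePlusPow, ff, coeff_mk, Finset.prod_range_succ, factorial_succ, Nat.cast_mul,
    Nat.cast_succ, smul_eq_mul]
  have hm : (m ! : ℚ) ≠ 0 := by positivity
  field_simp
  ring

theorem onePlusPow_subst_exp_sub_one (c : ℚ) :
    (onePlusPow c).subst (exp ℚ - 1 : ℚ⟦X⟧) = rescale c (exp ℚ) := by
  apply eq_rescale_exp_of_derivative_eq_smul
  · rw [derivative_subst_exp_sub_one, one_add_X_mul_derivative_onePlusPow,
      subst_smul HasSubst.exp_sub_one]
  · rw [constantCoeff_subst_of_constantCoeff_eq_zero (by simp),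
      ← coeff_zero_eq_constantCoeff_apply]
    simp [onePlusPow, ff]

theorem one_add_X_mul_derivative_log : (1 + X) * d⁄dX ℚ (log ℚ) = 1 := by
  ext (_ | m)
  · simp [deriv_log]
  · rw [add_mul, one_mul, map_add, coeff_succ_X_mul, deriv_log]
    simp [coeff_one, pow_succ]

theorem log_subst_exp_sub_one : (log ℚ).subst (exp ℚ - 1 : ℚ⟦X⟧) = X := by
  apply derivative.ext
  · rw [derivative_subst_exp_sub_one, one_add_X_mul_derivative_log,
      ← coe_substAlgHom HasSubst.exp_sub_one, map_one, derivative_X]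
  · rw [constantCoeff_subst_of_constantCoeff_eq_zero (by simp)]
    simp

theorem X_mul_LtS : X * LtS = log ℚ := by
  ext (_ | m)
  · simp
  · rw [coeff_succ_X_mul]
    simp [LtS, pow_succ]

theorem LtS_inv_subst_exp_sub_one : LtS⁻¹.subst (exp ℚ - 1 : ℚ⟦X⟧) = ebt 1 := by
  have hE : HasSubst (exp ℚ - 1 : ℚ⟦X⟧) := HasSubst.exp_sub_one
  have hLtS : constantCoeff LtS ≠ 0 := by
    rw [← coeff_zero_eq_constantCoeff_apply]; simp [LtS]
  have hright : LtS.subst (exp ℚ - 1 : ℚ⟦X⟧) * ebt 1 = 1 := by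
    refine mul_left_cancel₀ (X_ne_zero (R := ℚ)) ?_
    calc X * (LtS.subst (exp ℚ - 1 : ℚ⟦X⟧) * ebt 1)
        = LtS.subst (exp ℚ - 1 : ℚ⟦X⟧) * (X * ebt 1) := by ring
      _ = (LtS * X).subst (exp ℚ - 1 : ℚ⟦X⟧) := by
        rw [X_mul_ebt, rescale_one, subst_mul hE, subst_X hE]; rfl
      _ = X * 1 := by rw [mul_comm, X_mul_LtS, log_subst_exp_sub_one, mul_one]
  have hleft : LtS⁻¹.subst (exp ℚ - 1 : ℚ⟦X⟧) * LtS.subst (exp ℚ - 1 : ℚ⟦X⟧) = 1 := by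
    rw [← subst_mul hE, PowerSeries.inv_mul_cancel _ hLtS, ← coe_substAlgHom hE, map_one]
  exact left_inv_eq_right_inv hleft hright

theorem zp_inv_neg_natCast {f : ℚ⟦X⟧} (hf : constantCoeff f ≠ 0) (m : ℕ) :
    zp f⁻¹ (-m) = f ^ m := by
  rcases m with _ | m
  · exact pow_zero _
  · have hinv : f⁻¹⁻¹ = f :=
      (PowerSeries.inv_eq_iff_mul_eq_one (by simpa using hf)).mpr (PowerSeries.mul_inv_cancel f hf)
    change f⁻¹⁻¹ ^ (m + 1) = _
    rw [hinv]

theorem stmt7_general (n : ℕ) (l : ℕ) (hl : l < n) (c : ℚ) :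
    ∑ f ∈ Finset.Nat.antidiagonalTuple n l,
        (Nat.multinomial Finset.univ f : ℚ) * ∏ i, b2 c (f i) =
      Bpol ((l : ℤ) - n + 1) (c * n + 1) l := by
  obtain ⟨m, rfl⟩ := Nat.exists_eq_add_of_lt hl
  have hψ : constantCoeff (ebt 1) ≠ 0 := by rw [constantCoeff_ebt]; exact one_ne_zero
  have hE : X * ebt 1 = exp ℚ - 1 := by rw [X_mul_ebt, rescale_one]; rfl
  have hψl : ebt 1 ^ (l + 1) * (ebt 1)⁻¹ ^ (l + 1) = 1 := by
    rw [← mul_pow, PowerSeries.mul_inv_cancel _ hψ, one_pow]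
  have hexp : rescale (((l + m + 1 : ℕ) : ℚ) * c) (exp ℚ) * exp ℚ =
      rescale (c * (l + m + 1 : ℕ) + 1) expS := by
    rw [expS, mul_comm c, ← exp_mul_exp_eq_exp_add, rescale_one]; rfl
  simp only [b2]
  rw [← factorial_mul_coeff_pow, Bpol,
    show (l : ℤ) - ↑(l + m + 1) + 1 = -(m : ℕ) by push_cast; ring, zp_inv_neg_natCast hψ,
    ← coeff_subst_X_mul_mul_derivative_mul_inv_pow hψ _ l, hE,
    subst_pow HasSubst.exp_sub_one, subst_mul HasSubst.exp_sub_one, onePlusPow_subst_exp_sub_one,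
    LtS_inv_subst_exp_sub_one, map_sub, derivative_exp, derivative_one, sub_zero, mul_pow,
    rescale_exp_pow]
  congr 2
  linear_combination
    (ebt 1 ^ m * rescale (((l + m + 1 : ℕ) : ℚ) * c) (exp ℚ) * exp ℚ) * hψl + ebt 1 ^ m * hexp

theorem stmt7 (n : ℕ) (hn : 1 ≤ n) (l : ℕ) (hl : l < n) (c : ℚ) :
    ∑ f ∈ Finset.Nat.antidiagonalTuple n l,
        (Nat.multinomial Finset.univ f : ℚ) * ∏ i, b2 c (f i) =
      Bpol ((l : ℤ) - n + 1) (c * n + 1) l :=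
  stmt7_general n l hl c
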